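/- arXiv:2008.06930 — 9 statements merged into one kernel-verified Lean document; each statement's English description precedes it below -/
import Mathlib

section
/- Let k ≥ 1 and let v = (v₁,…,v_k) ∈ ℝ^k satisfy 0 ≤ v₁ ≤ ⋯ ≤ v_k ≤ 1, with mean v̄ = (1/k)Σᵢvᵢ. Define the seats-votes curve γ : ℝ → ℝ by γ(x) = (#{i : vᵢ + x − v̄ > 1/2})/k, and the jumps jᵢ = 1/2 + v̄ − v_{k+1−i} for 1 ≤ i ≤ k. Then the function x ↦ |γ(x) + γ(1−x) − 1| is integrable on ℝ and ∫_ℝ |γ(x) + γ(1−x) − 1| dx = (1/k) Σᵢ₌₁^k |jᵢ + j_{k+1−i} − 1| = (1/k) Σᵢ₌₁^k |vᵢ + v_{k+1−i} − 2v̄|. -/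
/-!
Since `γ x = (1/k) #{i | j i < x}`, pairing the `i`-th jump of `γ x` with the `(rev i)`-th jump of
`γ (1 - x)` gives `γ x + γ (1 - x) - 1 = (1/k) ∑ᵢ (1[j i < x] - 1[1 - j (rev i) ≤ x])`.
Both threshold sequences `j` and `i ↦ 1 - j (rev i)` are nondecreasing, so the half-lines
`(j i, ∞)` and `[1 - j (rev i), ∞)` form two chains and at each `x` all summands have the same
sign. Hence `|γ x + γ (1 - x) - 1|` is `1/k` times a sum of indicators of the symmetric differences
`(j i, ∞) ∆ [1 - j (rev i), ∞)`, whose lengths are `|j i + j (rev i) - 1|`.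
-/

open MeasureTheory Set
open scoped symmDiff

theorem abs_sum_eq_sum_abs_of_nonneg_or_nonpos {ι G : Type*} [AddCommGroup G] [LinearOrder G]
    [IsOrderedAddMonoid G] {s : Finset ι} {f : ι → G}
    (hf : (∀ i ∈ s, 0 ≤ f i) ∨ ∀ i ∈ s, f i ≤ 0) :
    |∑ i ∈ s, f i| = ∑ i ∈ s, |f i| := by
  rcases hf with hf | hf
  · rw [Finset.abs_sum_of_nonneg hf]
    exact Finset.sum_congr rfl fun i hi => (abs_of_nonneg (hf i hi)).symm
  · rw [abs_of_nonpos (Finset.sum_nonpos hf), ← Finset.sum_neg_distrib]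
    exact Finset.sum_congr rfl fun i hi => (abs_of_nonpos (hf i hi)).symm

theorem indicator_one_sub_indicator_one_nonneg {α : Type*} {S T : Set α} {x : α}
    (hx : x ∉ T \ S) : 0 ≤ S.indicator (1 : α → ℝ) x - T.indicator 1 x := by
  by_cases hS : x ∈ S
  · simp [indicator_of_mem hS, indicator_apply_le']
  · have hT : x ∉ T := fun hT => hx ⟨hT, hS⟩
    simp [indicator_of_notMem hS, indicator_of_notMem hT]

theorem abs_sum_indicator_one_sub_indicator_one_of_antitone {ι α : Type*} [LinearOrder ι]
    {S T : ι → Set α} (hS : Antitone S) (hT : Antitone T) (s : Finset ι) (x : α) :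
    |∑ i ∈ s, ((S i).indicator (1 : α → ℝ) x - (T i).indicator 1 x)|
      = ∑ i ∈ s, (S i ∆ T i).indicator 1 x := by
  have hsign : (∀ i ∈ s, x ∉ T i \ S i) ∨ ∀ i ∈ s, x ∉ S i \ T i := by
    by_contra! ⟨⟨i, -, hxTS⟩, ⟨i', -, hxST⟩⟩
    rcases le_total i i' with h | h
    · exact hxTS.2 (hS h hxST.1)
    · exact hxST.2 (hT h hxTS.1)
  rw [abs_sum_eq_sum_abs_of_nonneg_or_nonpos ?_]
  · refine Finset.sum_congr rfl fun i _ => ?_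
    rw [← abs_indicator_symmDiff,
      abs_of_nonneg (indicator_nonneg (f := 1) (fun _ _ => zero_le_one) x)]
  · refine hsign.imp (fun h i hi => indicator_one_sub_indicator_one_nonneg (h i hi))
      (fun h i hi => ?_)
    simpa using indicator_one_sub_indicator_one_nonneg (h i hi)

theorem Real.volume_Ioi_symmDiff_Ici (c d : ℝ) :
    volume (Ioi c ∆ Ici d) = ENNReal.ofReal |d - c| := by
  rw [measure_symmDiff_eq measurableSet_Ioi.nullMeasurableSet
    measurableSet_Ici.nullMeasurableSet, Ioi_sdiff_Ici, Ici_sdiff_Ioi, Real.volume_Ioo,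
    Real.volume_Icc]
  rcases le_total c d with h | h
  · rw [ENNReal.ofReal_of_nonpos (sub_nonpos.2 h), add_zero, abs_of_nonneg (sub_nonneg.2 h)]
  · rw [ENNReal.ofReal_of_nonpos (sub_nonpos.2 h), zero_add, abs_sub_comm,
      abs_of_nonneg (sub_nonneg.2 h)]

theorem Real.integrable_indicator_Ioi_symmDiff_Ici (c d : ℝ) :
    Integrable ((Ioi c ∆ Ici d).indicator (1 : ℝ → ℝ)) :=
  (integrable_indicator_iff (measurableSet_Ioi.symmDiff measurableSet_Ici)).2
    (integrableOn_const (by simp [Real.volume_Ioi_symmDiff_Ici]))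

theorem Real.integral_indicator_Ioi_symmDiff_Ici (c d : ℝ) :
    ∫ x, (Ioi c ∆ Ici d).indicator (1 : ℝ → ℝ) x = |d - c| := by
  rw [integral_indicator_one (measurableSet_Ioi.symmDiff measurableSet_Ici), measureReal_def,
    Real.volume_Ioi_symmDiff_Ici, ENNReal.toReal_ofReal (abs_nonneg _)]

theorem indicator_Ioi_apply_sub (a c x : ℝ) :
    (Ioi c).indicator (1 : ℝ → ℝ) (a - x) = 1 - (Ici (a - c)).indicator 1 x := by
  by_cases h : x < a - c
  · rw [indicator_of_mem (by rw [mem_Ioi]; linarith), indicator_of_notMem (notMem_Ici.2 h)]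
    simp
  · rw [indicator_of_notMem (by rw [mem_Ioi]; linarith),
      indicator_of_mem (mem_Ici.2 (not_lt.1 h))]
    simp

theorem integrable_abs_sum_indicator_Ioi_sub_indicator_Ici {ι : Type*} [Fintype ι]
    [LinearOrder ι] {a b : ι → ℝ} (ha : Monotone a) (hb : Monotone b) :
    Integrable fun x =>
      |∑ i, ((Ioi (a i)).indicator (1 : ℝ → ℝ) x - (Ici (b i)).indicator 1 x)| := by
  simp_rw [abs_sum_indicator_one_sub_indicator_one_of_antitone
    (fun _ _ h => Ioi_subset_Ioi (ha h)) (fun _ _ h => Ici_subset_Ici.2 (hb h))]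
  exact integrable_finsetSum _ fun i _ => Real.integrable_indicator_Ioi_symmDiff_Ici _ _

theorem integral_abs_sum_indicator_Ioi_sub_indicator_Ici {ι : Type*} [Fintype ι]
    [LinearOrder ι] {a b : ι → ℝ} (ha : Monotone a) (hb : Monotone b) :
    ∫ x, |∑ i, ((Ioi (a i)).indicator (1 : ℝ → ℝ) x - (Ici (b i)).indicator 1 x)|
      = ∑ i, |b i - a i| := by
  simp_rw [abs_sum_indicator_one_sub_indicator_one_of_antitone
    (fun _ _ h => Ioi_subset_Ioi (ha h)) (fun _ _ h => Ici_subset_Ici.2 (hb h))]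
  rw [integral_finsetSum _ fun i _ => Real.integrable_indicator_Ioi_symmDiff_Ici _ _]
  simp_rw [Real.integral_indicator_Ioi_symmDiff_Ici]

theorem natCard_share_gt_eq_sum_indicator {k : ℕ} (v : Fin k → ℝ) (vbar x : ℝ) :
    (Nat.card {i : Fin k // v i + x - vbar > 1 / 2} : ℝ)
      = ∑ i : Fin k, (Ioi (1 / 2 + vbar - v i.rev)).indicator 1 x := by
  rw [Nat.card_eq_fintype_card, Fintype.card_subtype, Finset.natCast_card_filter,
    ← Equiv.sum_comp Fin.revPerm]
  refine Finset.sum_congr rfl fun i _ => ?_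
  simp only [Fin.revPerm_apply, indicator_apply, mem_Ioi, Pi.one_apply]
  exact if_congr ⟨fun h => by linarith, fun h => by linarith⟩ rfl rfl

theorem sum_indicator_Ioi_add_sum_indicator_Ioi_one_sub {k : ℕ} (a : Fin k → ℝ) (x : ℝ) :
    ∑ i, (Ioi (a i)).indicator (1 : ℝ → ℝ) x + ∑ i, (Ioi (a i)).indicator 1 (1 - x)
      = ∑ i, ((Ioi (a i)).indicator 1 x - (Ici (1 - a i.rev)).indicator 1 x) + k := by
  rw [← Equiv.sum_comp Fin.revPerm fun i => (Ioi (a i)).indicator (1 : ℝ → ℝ) (1 - x)]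
  simp only [Fin.revPerm_apply, indicator_Ioi_apply_sub, Finset.sum_sub_distrib,
    Finset.sum_const, Finset.card_univ, Fintype.card_fin, nsmul_eq_mul, mul_one]
  ring

theorem partisan_gini_integral_formula_general
    (k : ℕ) (hk : 1 ≤ k) (v : Fin k → ℝ)
    (hmono : Monotone v)
    (vbar : ℝ)
    (γ : ℝ → ℝ)
    (hγ : ∀ x, γ x = (Nat.card {i : Fin k // v i + x - vbar > 1 / 2} : ℝ) / k)
    (j : Fin k → ℝ) (hj : ∀ i, j i = 1 / 2 + vbar - v i.rev) :
    Integrable (fun x : ℝ => |γ x + γ (1 - x) - 1|) ∧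
    (∫ x : ℝ, |γ x + γ (1 - x) - 1|) = (1 / k) * ∑ i, |j i + j i.rev - 1| ∧
    (1 / k) * ∑ i, |j i + j i.rev - 1| = (1 / k) * ∑ i, |v i + v i.rev - 2 * vbar| := by
  have hk0 : (0 : ℝ) < k := by exact_mod_cast hk
  have hγj (y : ℝ) : γ y = (1 / k) * ∑ i, (Ioi (j i)).indicator (1 : ℝ → ℝ) y := by
    rw [hγ, natCard_share_gt_eq_sum_indicator, ← one_div_mul_eq_div]
    simp only [hj]
  have hj_mono : Monotone j := fun a b hab => by
    simp only [hj]; linarith [hmono (Fin.rev_le_rev.2 hab)]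
  have hj_rev_mono : Monotone fun i : Fin k => 1 - j i.rev := fun a b hab => by
    simp only [hj, Fin.rev_rev]; linarith [hmono hab]
  have hγ_step : (fun x => |γ x + γ (1 - x) - 1|) = fun x => (1 / k : ℝ) *
      |∑ i, ((Ioi (j i)).indicator (1 : ℝ → ℝ) x - (Ici (1 - j i.rev)).indicator 1 x)| := by
    funext x
    rw [hγj, hγj, ← mul_add, sum_indicator_Ioi_add_sum_indicator_Ioi_one_sub, mul_add,
      one_div_mul_cancel hk0.ne', add_sub_cancel_right, abs_mul, abs_of_pos (one_div_pos.2 hk0)]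
  refine ⟨hγ_step ▸ (integrable_abs_sum_indicator_Ioi_sub_indicator_Ici hj_mono
    hj_rev_mono).const_mul _, ?_, ?_⟩
  · rw [hγ_step, integral_const_mul, integral_abs_sum_indicator_Ioi_sub_indicator_Ici hj_mono
      hj_rev_mono]
    congr 1
    refine Finset.sum_congr rfl fun i _ => ?_
    rw [abs_sub_comm]
    congr 1
    ring
  · congr 1
    refine Finset.sum_congr rfl fun i _ => ?_
    rw [hj, hj, Fin.rev_rev, ← abs_neg]
    congr 1
    ring

/-- For a nondecreasing vote-share vector `v` with entries in `[0,1]`,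
mean `v̄`, seats-votes curve `γ(x) = #{i : vᵢ + x − v̄ > 1/2}/k` and jumps
`jᵢ = 1/2 + v̄ − v_{k+1−i}`, the function `x ↦ |γ(x) + γ(1−x) − 1|` is integrable on `ℝ`
and its integral equals `(1/k) Σᵢ |jᵢ + j_{k+1−i} − 1| = (1/k) Σᵢ |vᵢ + v_{k+1−i} − 2v̄|`. -/
theorem partisan_gini_integral_formula
    (k : ℕ) (hk : 1 ≤ k) (v : Fin k → ℝ)
    (hmono : Monotone v) (h0 : ∀ i, 0 ≤ v i) (h1 : ∀ i, v i ≤ 1)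
    (vbar : ℝ) (hvbar : vbar = (∑ i, v i) / k)
    (γ : ℝ → ℝ)
    (hγ : ∀ x, γ x = (Nat.card {i : Fin k // v i + x - vbar > 1 / 2} : ℝ) / k)
    (j : Fin k → ℝ) (hj : ∀ i, j i = 1 / 2 + vbar - v i.rev) :
    Integrable (fun x : ℝ => |γ x + γ (1 - x) - 1|) ∧
    (∫ x : ℝ, |γ x + γ (1 - x) - 1|) = (1 / k) * ∑ i, |j i + j i.rev - 1| ∧
    (1 / k) * ∑ i, |j i + j i.rev - 1| = (1 / k) * ∑ i, |v i + v i.rev - 2 * vbar| :=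
  partisan_gini_integral_formula_general k hk v hmono vbar γ hγ j hj
end

section
/- Let k ≥ 1 and let v = (v₁,…,v_k) ∈ ℝ^k satisfy 0 ≤ v₁ ≤ ⋯ ≤ v_k ≤ 1, with mean v̄ = (1/k)Σᵢvᵢ and median v_med (equal to v_{(k+1)/2} if k is odd and to (v_{k/2} + v_{k/2+1})/2 if k is even). If v_med > v̄, then #{i : vᵢ > v̄} ≥ ⌈k/2⌉; consequently, the seats-votes curve value γ(1/2) = (#{i : vᵢ > v̄})/k satisfies γ(1/2) ≥ 1/2, i.e. the partisan bias PB = γ(1/2) − 1/2 is nonnegative. -/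
/-! Since `v` is sorted, every district from the (upper) middle index on has share at least the
median's, hence above the mean; at least `⌈k/2⌉` districts lie there. At `x = 1/2` the swing
condition `vᵢ + 1/2 - v̄ > 1/2` is just `vᵢ > v̄`. -/

open Finset

theorem Monotone.sub_le_card_lt_apply {α : Type*} [Preorder α] {k : ℕ} {v : Fin k → α}
    (hv : Monotone v) {c : α} {m : Fin k} (hm : c < v m) :
    k - m ≤ Nat.card {i : Fin k // c < v i} := by
  classical
  rw [Nat.card_eq_fintype_card, Fintype.card_subtype, ← Fin.card_Ici m]
  exact card_le_card fun i hi ↦ mem_filter.2 ⟨mem_univ i, hm.trans_le (hv (mem_Ici.1 hi))⟩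

/-- If the median exceeds the mean, then at least `⌈k/2⌉` districts have
vote share above the mean; consequently `γ(1/2) = #{i : vᵢ > v̄}/k ≥ 1/2`, i.e. the
partisan bias `PB = γ(1/2) − 1/2` is nonnegative. -/
theorem median_above_mean_implies_nonneg_partisan_bias
    (k : ℕ) (hk : 1 ≤ k) (v : Fin k → ℝ)
    (hmono : Monotone v)
    (vbar : ℝ)
    (vmed : ℝ)
    (hvmed : if k % 2 = 1 then vmed = v ⟨(k - 1) / 2, by omega⟩
      else vmed = (v ⟨k / 2 - 1, by omega⟩ + v ⟨k / 2, by omega⟩) / 2)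
    (γ : ℝ → ℝ)
    (hγ : ∀ x, γ x = (Nat.card {i : Fin k // v i + x - vbar > 1 / 2} : ℝ) / k)
    (hmm : vmed > vbar) :
    ⌈(k : ℝ) / 2⌉₊ ≤ Nat.card {i : Fin k // v i > vbar} ∧
    γ (1 / 2) = (Nat.card {i : Fin k // v i > vbar} : ℝ) / k ∧
    γ (1 / 2) ≥ 1 / 2 ∧
    0 ≤ γ (1 / 2) - 1 / 2 := by
  set N := Nat.card {i : Fin k // v i > vbar}
  obtain ⟨m, hm, hupper⟩ : ∃ m : Fin k, vbar < v m ∧ k ≤ 2 * (k - m) := by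
    split_ifs at hvmed
    · exact ⟨⟨(k - 1) / 2, by omega⟩, hvmed ▸ hmm, by simp only; omega⟩
    · have hmid : v ⟨k / 2 - 1, by omega⟩ ≤ v ⟨k / 2, by omega⟩ :=
        hmono (Fin.mk_le_mk.2 (by omega))
      exact ⟨⟨k / 2, by omega⟩, by linarith, by simp only; omega⟩
  have hkN : (k : ℝ) ≤ 2 * N := by
    have : k - m ≤ N := hmono.sub_le_card_lt_apply hm
    exact_mod_cast (by omega : k ≤ 2 * N)
  have hγN : γ (1 / 2) = N / k := by
    rw [hγ]
    congr 4
    ext i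
    constructor <;> intro h <;> linarith
  have hhalf : (1 : ℝ) / 2 ≤ N / k := by
    rw [le_div_iff₀ (by positivity)]
    linarith
  exact ⟨Nat.ceil_le.2 (by linarith), hγN, hγN ▸ hhalf, by linarith⟩
end

section
/- Let v₁ ≤ v₂ ≤ v₃ ≤ v₄ be real numbers with 0 ≤ vᵢ ≤ 1 for all i, mean v̄ = (v₁+v₂+v₃+v₄)/4, and median v_med = (v₂+v₃)/2. If v₁ ≤ 1/2 (Party B wins a seat), then the mean-median score satisfies MM = v_med − v̄ ≥ v̄ − 3/4. In particular, if additionally v̄ > 3/4, then MM > 0. -/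
theorem paradox_forced_by_arithmetic_general
    (v1 v2 v3 v4 : ℝ)
    (h1 : v4 ≤ 1)
    (vbar : ℝ) (hvbar : vbar = (v1 + v2 + v3 + v4) / 4)
    (vmed : ℝ) (hvmed : vmed = (v2 + v3) / 2)
    (MM : ℝ) (hMM : MM = vmed - vbar)
    (hBseat : v1 ≤ 1 / 2) :
    MM ≥ vbar - 3 / 4 ∧ (vbar > 3 / 4 → MM > 0) := by
  -- `2 (MM - vbar + 3/4) = 3/2 - v1 - v4`: the middle shares cancel.
  have hMM_ge : MM ≥ vbar - 3 / 4 := by subst hvbar hvmed hMM; linarith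
  exact ⟨hMM_ge, fun hvbar_gt => by linarith⟩

/-- paradox forced by arithmetic: for four ordered vote shares in `[0,1]`,
if `v₁ ≤ 1/2` (Party B wins a seat) then `MM = v_med − v̄ ≥ v̄ − 3/4`; in particular
if also `v̄ > 3/4` then `MM > 0`. -/
theorem paradox_forced_by_arithmetic
    (v1 v2 v3 v4 : ℝ) (h12 : v1 ≤ v2) (h23 : v2 ≤ v3) (h34 : v3 ≤ v4)
    (h0 : 0 ≤ v1) (h1 : v4 ≤ 1)
    (vbar : ℝ) (hvbar : vbar = (v1 + v2 + v3 + v4) / 4)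
    (vmed : ℝ) (hvmed : vmed = (v2 + v3) / 2)
    (MM : ℝ) (hMM : MM = vmed - vbar)
    (hBseat : v1 ≤ 1 / 2) :
    MM ≥ vbar - 3 / 4 ∧ (vbar > 3 / 4 → MM > 0) :=
  paradox_forced_by_arithmetic_general v1 v2 v3 v4 h1 vbar hvbar vmed hvmed MM hMM hBseat
end

section
/- Let v₁ ≤ v₂ ≤ v₃ ≤ v₄ be real numbers with mean v̄ = (v₁+v₂+v₃+v₄)/4, and suppose there is a real number Q with vᵢ ≤ Q for all i and Q < 2v̄ − 1/2. Then v₂ > 1/2; that is, at most one district has Party A vote share at most 1/2 (Party B can win at most one seat). -/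
theorem geography_bound_at_most_one_B_seat_general
    (v1 v2 v3 v4 : ℝ) (h12 : v1 ≤ v2)
    (vbar : ℝ) (hvbar : vbar = (v1 + v2 + v3 + v4) / 4)
    (Q : ℝ) (hQ3 : v3 ≤ Q) (hQ4 : v4 ≤ Q)
    (hQ : Q < 2 * vbar - 1 / 2) :
    v2 > 1 / 2 := by
  -- `v1 + v2 + v3 + v4 = 4 * vbar > 2 * Q + 1`, while the top two districts hold at most `2 * Q`.
  have hbottom : 1 < v1 + v2 := by linarith
  linarith

/-- geography bound: if all four ordered vote shares are at most `Q`
with `Q < 2v̄ − 1/2`, then `v₂ > 1/2`: Party B can win at most one seat. -/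
theorem geography_bound_at_most_one_B_seat
    (v1 v2 v3 v4 : ℝ) (h12 : v1 ≤ v2) (h23 : v2 ≤ v3) (h34 : v3 ≤ v4)
    (vbar : ℝ) (hvbar : vbar = (v1 + v2 + v3 + v4) / 4)
    (Q : ℝ) (hQ1 : v1 ≤ Q) (hQ2 : v2 ≤ Q) (hQ3 : v3 ≤ Q) (hQ4 : v4 ≤ Q)
    (hQ : Q < 2 * vbar - 1 / 2) :
    v2 > 1 / 2 :=
  geography_bound_at_most_one_B_seat_general v1 v2 v3 v4 h12 vbar hvbar Q hQ3 hQ4 hQ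
end

section
/- Let v₁ ≤ v₂ ≤ v₃ ≤ v₄ be real numbers with mean v̄ = (v₁+v₂+v₃+v₄)/4 and median v_med = (v₂+v₃)/2, and suppose there is a real number Q with vᵢ ≤ Q for all i and Q < 2v̄ − 1/2. If v₁ ≤ 1/2 (Party B wins a seat), then the mean-median score satisfies MM = v_med − v̄ > 0. -/
theorem paradox_forced_by_geography_general
    (v1 v2 v3 v4 : ℝ)
    (vbar : ℝ) (hvbar : vbar = (v1 + v2 + v3 + v4) / 4)
    (vmed : ℝ) (hvmed : vmed = (v2 + v3) / 2)
    (Q : ℝ) (hQ4 : v4 ≤ Q)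
    (hQ : Q < 2 * vbar - 1 / 2)
    (MM : ℝ) (hMM : MM = vmed - vbar)
    (hBseat : v1 ≤ 1 / 2) :
    MM > 0 := by
  subst hvbar hvmed hMM
  -- `hQ` with `v4 ≤ Q` and `v1 ≤ 1/2` reads `v1 + v4 < 2 v̄`: the extremes sum to less than half the total.
  have extremes_lt_middle : v1 + v4 < v2 + v3 := by linarith
  linarith

/-- paradox forced by geography: if all four ordered vote shares are at
most `Q` with `Q < 2v̄ − 1/2` and `v₁ ≤ 1/2` (Party B wins a seat), then the
mean-median score `MM = v_med − v̄` is positive. -/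
theorem paradox_forced_by_geography
    (v1 v2 v3 v4 : ℝ) (h12 : v1 ≤ v2) (h23 : v2 ≤ v3) (h34 : v3 ≤ v4)
    (vbar : ℝ) (hvbar : vbar = (v1 + v2 + v3 + v4) / 4)
    (vmed : ℝ) (hvmed : vmed = (v2 + v3) / 2)
    (Q : ℝ) (hQ1 : v1 ≤ Q) (hQ2 : v2 ≤ Q) (hQ3 : v3 ≤ Q) (hQ4 : v4 ≤ Q)
    (hQ : Q < 2 * vbar - 1 / 2)
    (MM : ℝ) (hMM : MM = vmed - vbar)
    (hBseat : v1 ≤ 1 / 2) :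
    MM > 0 :=
  paradox_forced_by_geography_general v1 v2 v3 v4 vbar hvbar vmed hvmed Q hQ4 hQ MM hMM hBseat
end

section
/- Let k ≥ 1 be an odd integer and let v = (v₁,…,v_k) ∈ ℝ^k satisfy 0 ≤ v₁ ≤ ⋯ ≤ v_k ≤ 1, with mean v̄ = (1/k)Σᵢvᵢ and median v_med = v_{(k+1)/2}. Let PG = (1/k) Σᵢ₌₁^k |vᵢ + v_{k+1−i} − 2v̄| and MM = v_med − v̄. Then PG ≥ (4/k)·|MM|. -/
/-! The vector `fᵢ = vᵢ + v_{k+1−i} − 2v̄` has total sum `0`, and for odd `k` its middle entry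
is `f_med = 2·MM`. A vanishing sum forces one entry to be balanced by the others,
`|f_med| ≤ Σ_{i ≠ med} |fᵢ|`, so `k·PG = Σ |fᵢ| ≥ 2|f_med| = 4|MM|`. -/

open Finset

theorem two_nsmul_abs_le_sum_abs_of_sum_eq_zero {ι G : Type*} [DecidableEq ι] [AddCommGroup G]
    [LinearOrder G] [IsOrderedAddMonoid G] {s : Finset ι} {f : ι → G} (hf : ∑ i ∈ s, f i = 0) {a : ι}
    (ha : a ∈ s) : 2 • |f a| ≤ ∑ i ∈ s, |f i| := by
  have hrest : ∑ i ∈ s.erase a, f i = -f a := by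
    rw [← add_sum_erase s f ha] at hf
    exact eq_neg_of_add_eq_zero_right hf
  have hbound : |f a| ≤ ∑ i ∈ s.erase a, |f i| :=
    calc |f a| = |∑ i ∈ s.erase a, f i| := by rw [hrest, abs_neg]
      _ ≤ ∑ i ∈ s.erase a, |f i| := abs_sum_le_sum_abs _ _
  rw [← add_sum_erase s _ ha, two_nsmul]
  exact add_le_add_right hbound _

theorem Fin.sum_comp_rev {M : Type*} [AddCommMonoid M] {k : ℕ} (v : Fin k → M) :
    ∑ i : Fin k, v i.rev = ∑ i, v i :=
  Equiv.sum_comp Fin.revPerm v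

theorem Fin.sum_add_rev_sub_two_mul_mean {K : Type*} [Field K] [CharZero K] {k : ℕ} (hk : k ≠ 0)
    (v : Fin k → K) :
    ∑ i, (v i + v i.rev - 2 * ((∑ j, v j) / k)) = 0 := by
  rw [sum_sub_distrib, sum_add_distrib, Fin.sum_comp_rev, Fin.sum_const, nsmul_eq_mul]
  field_simp
  ring

theorem Fin.rev_middle {k : ℕ} (hodd : k % 2 = 1) (h : (k - 1) / 2 < k) :
    Fin.rev ⟨(k - 1) / 2, h⟩ = ⟨(k - 1) / 2, h⟩ := by
  ext
  simp only [Fin.val_rev]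
  omega

/-- for odd `k`, the partisan Gini score
`PG = (1/k) Σᵢ |vᵢ + v_{k+1−i} − 2v̄|` satisfies `PG ≥ (4/k)·|MM|`
where `MM = v_med − v̄`. -/
theorem partisan_gini_lower_bound_odd
    (k : ℕ) (hodd : k % 2 = 1) (v : Fin k → ℝ)
    (vbar : ℝ) (hvbar : vbar = (∑ i, v i) / k)
    (vmed : ℝ) (hvmed : vmed = v ⟨(k - 1) / 2, by omega⟩)
    (PG : ℝ) (hPG : PG = (1 / k) * ∑ i, |v i + v i.rev - 2 * vbar|)
    (MM : ℝ) (hMM : MM = vmed - vbar) :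
    PG ≥ (4 / k) * |MM| := by
  have hk : (0 : ℝ) < k := by exact_mod_cast (show 0 < k by omega)
  set m : Fin k := ⟨(k - 1) / 2, by omega⟩
  have hsum : ∑ i, (v i + v i.rev - 2 * vbar) = 0 :=
    hvbar ▸ Fin.sum_add_rev_sub_two_mul_mean (by omega) v
  have hmid : v m + v m.rev - 2 * vbar = 2 * MM := by
    rw [Fin.rev_middle hodd, hMM, hvmed]
    ring
  have hbound := two_nsmul_abs_le_sum_abs_of_sum_eq_zero hsum (mem_univ m)
  rw [hmid, abs_mul, abs_two, two_nsmul] at hbound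
  rw [hPG, ge_iff_le, div_mul_eq_mul_div, one_div_mul_eq_div, div_le_div_iff_of_pos_right hk]
  linarith
end

section
/- Let v₁ ≤ v₂ ≤ v₃ be real numbers with mean v̄ = (v₁+v₂+v₃)/3 and median v_med = v₂. Let PG = (1/3) Σᵢ₌₁³ |vᵢ + v_{4−i} − 2v̄| and MM = v_med − v̄. Then PG = (4/3)·|MM|. -/
theorem partisan_gini_eq_three_districts_general
    (v1 v2 v3 : ℝ)
    (vbar : ℝ) (hvbar : vbar = (v1 + v2 + v3) / 3)
    (vmed : ℝ) (hvmed : vmed = v2)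
    (PG : ℝ) (hPG : PG = (1 / 3) * (|v1 + v3 - 2 * vbar| + |v2 + v2 - 2 * vbar|
      + |v3 + v1 - 2 * vbar|))
    (MM : ℝ) (hMM : MM = vmed - vbar) :
    PG = (4 / 3) * |MM| := by
  have outer_pair : v1 + v3 - 2 * vbar = -MM := by rw [hMM, hvmed, hvbar]; ring
  have middle_pair : v2 + v2 - 2 * vbar = 2 * MM := by rw [hMM, hvmed, hvbar]; ring
  rw [hPG, add_comm v3 v1, outer_pair, middle_pair, abs_neg, abs_mul, abs_two]
  ring

/-- for `k = 3` districts, `PG = (4/3)·|MM|` exactly. -/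
theorem partisan_gini_eq_three_districts
    (v1 v2 v3 : ℝ) (h12 : v1 ≤ v2) (h23 : v2 ≤ v3)
    (vbar : ℝ) (hvbar : vbar = (v1 + v2 + v3) / 3)
    (vmed : ℝ) (hvmed : vmed = v2)
    (PG : ℝ) (hPG : PG = (1 / 3) * (|v1 + v3 - 2 * vbar| + |v2 + v2 - 2 * vbar|
      + |v3 + v1 - 2 * vbar|))
    (MM : ℝ) (hMM : MM = vmed - vbar) :
    PG = (4 / 3) * |MM| :=
  partisan_gini_eq_three_districts_general v1 v2 v3 vbar hvbar vmed hvmed PG hPG MM hMM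
end

section
/- Let v₁ ≤ v₂ ≤ v₃ ≤ v₄ be real numbers with mean v̄ = (v₁+v₂+v₃+v₄)/4 and median v_med = (v₂+v₃)/2. Let PG = (1/4) Σᵢ₌₁⁴ |vᵢ + v_{5−i} − 2v̄| and MM = v_med − v̄. Then PG = 2·|MM|. -/
/-! The outer pair and the inner pair of four numbers together sum to four times the mean, so
their deviations from twice the mean are negatives of each other. Hence all four terms of `PG`
have the same absolute value `|v₂ + v₃ - 2 v̄|`, which is exactly `2 |MM|`. -/

theorem outer_add_sub_two_mul_mean_eq_neg (v1 v2 v3 v4 : ℝ) :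
    v1 + v4 - 2 * ((v1 + v2 + v3 + v4) / 4) = -(v2 + v3 - 2 * ((v1 + v2 + v3 + v4) / 4)) := by
  ring

theorem partisan_gini_eq_four_districts_general
    (v1 v2 v3 v4 : ℝ)
    (vbar : ℝ) (hvbar : vbar = (v1 + v2 + v3 + v4) / 4)
    (vmed : ℝ) (hvmed : vmed = (v2 + v3) / 2)
    (PG : ℝ) (hPG : PG = (1 / 4) * (|v1 + v4 - 2 * vbar| + |v2 + v3 - 2 * vbar|
      + |v3 + v2 - 2 * vbar| + |v4 + v1 - 2 * vbar|))
    (MM : ℝ) (hMM : MM = vmed - vbar) :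
    PG = 2 * |MM| := by
  have hMM_half : MM = (v2 + v3 - 2 * vbar) / 2 := by rw [hMM, hvmed]; ring
  have houter : v1 + v4 - 2 * vbar = -(v2 + v3 - 2 * vbar) := by
    rw [hvbar]; exact outer_add_sub_two_mul_mean_eq_neg v1 v2 v3 v4
  rw [hPG, hMM_half, add_comm v3 v2, add_comm v4 v1, houter, abs_neg, abs_div, abs_two]
  ring

/-- for `k = 4` districts, `PG = 2·|MM|` exactly. -/
theorem partisan_gini_eq_four_districts
    (v1 v2 v3 v4 : ℝ) (h12 : v1 ≤ v2) (h23 : v2 ≤ v3) (h34 : v3 ≤ v4)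
    (vbar : ℝ) (hvbar : vbar = (v1 + v2 + v3 + v4) / 4)
    (vmed : ℝ) (hvmed : vmed = (v2 + v3) / 2)
    (PG : ℝ) (hPG : PG = (1 / 4) * (|v1 + v4 - 2 * vbar| + |v2 + v3 - 2 * vbar|
      + |v3 + v2 - 2 * vbar| + |v4 + v1 - 2 * vbar|))
    (MM : ℝ) (hMM : MM = vmed - vbar) :
    PG = 2 * |MM| :=
  partisan_gini_eq_four_districts_general v1 v2 v3 v4 vbar hvbar vmed hvmed PG hPG MM hMM
end

section
/- For a vote-share vector v = (v₁,…,v₅) ∈ ℝ⁵ with v₁ ≤ ⋯ ≤ v₅, define v̄ = (1/5)Σᵢvᵢ, MM(v) = v₃ − v̄, and PG(v) = (1/5) Σᵢ₌₁⁵ |vᵢ + v₆₋ᵢ − 2v̄|. Then the vectors v = (0.2, 0.3, 0.4, 0.5, 0.7) and v″ = (0.19, 0.31, 0.4, 0.5, 0.7) satisfy MM(v) = MM(v″) (both equal −0.02) but PG(v) ≠ PG(v″) (they equal 0.048 and 0.04, respectively). Consequently, for k = 5 the partisan Gini score is not determined by the mean-median score. -/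
/-- Mean of a 5-district vote-share vector. -/
noncomputable def vbar5 (v : Fin 5 → ℝ) : ℝ := (∑ i, v i) / 5

/-- Mean-median score for 5 districts: median (third-smallest entry) minus mean. -/
noncomputable def MM5 (v : Fin 5 → ℝ) : ℝ := v 2 - vbar5 v

/-- Partisan Gini score for 5 districts under uniform partisan swing:
`PG = (1/5) Σᵢ₌₁⁵ |vᵢ + v₆₋ᵢ − 2v̄|`. -/
noncomputable def PG5 (v : Fin 5 → ℝ) : ℝ := (1 / 5) * ∑ i, |v i + v i.rev - 2 * vbar5 v|

/-!
Moving 0.01 of vote share from the first to the second district changes neither the mean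
(0.42) nor the median, hence not the mean-median score, but it shrinks the paired deviations
`vᵢ + v₆₋ᵢ - 2v̄` of the outer and inner pairs from `0.06` and `-0.04` to `0.05` and `-0.03`.
-/

lemma vbar5_eq (v : Fin 5 → ℝ) : vbar5 v = (v 0 + v 1 + v 2 + v 3 + v 4) / 5 := by
  rw [vbar5, Fin.sum_univ_five]

lemma PG5_eq (v : Fin 5 → ℝ) :
    PG5 v = (2 * |v 0 + v 4 - 2 * vbar5 v| + 2 * |v 1 + v 3 - 2 * vbar5 v|
      + |2 * v 2 - 2 * vbar5 v|) / 5 := by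
  rw [PG5, Fin.sum_univ_five]
  change 1 / 5 * (|v 0 + v 4 - _| + |v 1 + v 3 - _| + |v 2 + v 2 - _| + |v 3 + v 1 - _|
    + |v 4 + v 0 - _|) = _
  rw [add_comm (v 4), add_comm (v 3), ← two_mul (v 2)]
  ring

lemma monotone_vec_five {α : Type*} [Preorder α] {a b c d e : α}
    (hab : a ≤ b) (hbc : b ≤ c) (hcd : c ≤ d) (hde : d ≤ e) : Monotone ![a, b, c, d, e] := by
  simp [monotone_vecCons, hab, hbc, hcd, hde, Subsingleton.monotone]

/-- `v = (0.2, 0.3, 0.4, 0.5, 0.7)` and `v″ = (0.19, 0.31, 0.4, 0.5, 0.7)`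
have equal mean-median scores (both `−0.02`) but different partisan Gini scores
(`0.048` and `0.04`); hence for `k = 5` the partisan Gini score is not a function of
the mean-median score. -/
theorem partisan_gini_not_determined_by_mean_median :
    let v : Fin 5 → ℝ := ![0.2, 0.3, 0.4, 0.5, 0.7]
    let v'' : Fin 5 → ℝ := ![0.19, 0.31, 0.4, 0.5, 0.7]
    MM5 v = MM5 v'' ∧ MM5 v = -0.02 ∧ MM5 v'' = -0.02 ∧
    PG5 v = 0.048 ∧ PG5 v'' = 0.04 ∧ PG5 v ≠ PG5 v'' ∧
    ¬ ∃ f : ℝ → ℝ, ∀ w : Fin 5 → ℝ, Monotone w → (∀ i, 0 ≤ w i) → (∀ i, w i ≤ 1) →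
      PG5 w = f (MM5 w) := by
  intro v v''
  have hMM : MM5 v = -0.02 := by
    simp only [MM5, vbar5_eq, v, Matrix.cons_val, Matrix.cons_val_zero, Matrix.cons_val_one]
    norm_num
  have hMM'' : MM5 v'' = -0.02 := by
    simp only [MM5, vbar5_eq, v'', Matrix.cons_val, Matrix.cons_val_zero, Matrix.cons_val_one]
    norm_num
  have hPG : PG5 v = 0.048 := by
    simp only [PG5_eq, vbar5_eq, v, Matrix.cons_val, Matrix.cons_val_zero, Matrix.cons_val_one]
    norm_num [abs_of_pos, abs_of_neg]
  have hPG'' : PG5 v'' = 0.04 := by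
    simp only [PG5_eq, vbar5_eq, v'', Matrix.cons_val, Matrix.cons_val_zero, Matrix.cons_val_one]
    norm_num [abs_of_pos, abs_of_neg]
  have hPG_ne : PG5 v ≠ PG5 v'' := by norm_num [hPG, hPG'']
  refine ⟨hMM.trans hMM''.symm, hMM, hMM'', hPG, hPG'', hPG_ne, ?_⟩
  rintro ⟨f, hf⟩
  have hv := hf v (monotone_vec_five (by norm_num) (by norm_num) (by norm_num) (by norm_num))
    (fun i => by fin_cases i <;> norm_num [v]) (fun i => by fin_cases i <;> norm_num [v])
  have hv'' := hf v'' (monotone_vec_five (by norm_num) (by norm_num) (by norm_num) (by norm_num))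
    (fun i => by fin_cases i <;> norm_num [v'']) (fun i => by fin_cases i <;> norm_num [v''])
  exact hPG_ne (by rw [hv, hv'', hMM, hMM''])
end
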